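/- arXiv:1506.04485 — 2 statements merged into one kernel-verified Lean document; each statement's English description precedes it below -/
import Mathlib

section
/- For the single-element system F₁ = {x ⊕ y ⊕ z ⊕ 1} and the system F₂ = {¬x, ¬y}, we have d(F₁) = d(F₂) = 2, yet over the basis B₂ = M ∪ {x ⊕ y ⊕ z ⊕ 1} the inversion complexities differ: I_{B₂}(F₁) = 1 while I_{B₂}(F₂) = 2. In particular, inversion complexity over B₂ is not a function of d(F) alone. -/
open Classical in
/-- Number of jumps (1→0 drops of some member of `F`) between consecutive
elements of a list of Boolean tuples. -/
noncomputable def jumps {k : ℕ} (F : Finset ((Fin k → Bool) → Bool)) :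
    List (Fin k → Bool) → ℕ
  | a :: b :: t =>
      (if ∃ f ∈ F, f a = true ∧ f b = false then 1 else 0) + jumps F (b :: t)
  | _ => 0

/-- Number of value changes of `h` between consecutive elements of a list. -/
def changes {k : ℕ} (h : (Fin k → Bool) → Bool) :
    List (Fin k → Bool) → ℕ
  | a :: b :: t => (if h a ≠ h b then 1 else 0) + changes h (b :: t)
  | _ => 0

/-- An increasing chain of pairwise distinct tuples (coordinatewise order). -/
def IsIncChain {k : ℕ} (l : List (Fin k → Bool)) : Prop :=
  l.Chain' (· ≤ ·) ∧ l.Pairwise (· ≠ ·)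

/-- The decrease `d(F)` of a system of Boolean functions: the maximum number of
jumps over all increasing chains. -/
noncomputable def decrease {k : ℕ} (F : Finset ((Fin k → Bool) → Bool)) : ℕ :=
  sSup {m | ∃ l, IsIncChain l ∧ jumps F l = m}

/-- The decrease `d(f)` of a single Boolean function. -/
noncomputable def decrease1 {k : ℕ} (f : (Fin k → Bool) → Bool) : ℕ :=
  decrease {f}
/-- A Boolean circuit over the basis consisting of all monotone Boolean
functions (weight 0) together with the non-monotone basis functions from `Ω`
(weight 1).  Gate `i` may read the `n` inputs and all previous gate values. -/
structure Circuit (n : ℕ) (Ω : Set (Σ m : ℕ, (Fin m → Bool) → Bool)) where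
  size : ℕ
  gate : (i : Fin size) → ((Fin (n + i) → Bool) → Bool)
  nonmono : Finset (Fin size)
  mono_ok : ∀ i, i ∉ nonmono → Monotone (gate i)
  basis_ok : ∀ i ∈ nonmono, ∃ ω ∈ Ω, ∃ sel : Fin ω.1 → Fin (n + i),
      gate i = fun v => ω.2 (fun j => v (sel j))

/-- The value carried by wire `j` of the circuit (wires `0,…,n-1` are the
inputs, wire `n+i` is the output of gate `i`). -/
def Circuit.wire {n : ℕ} {Ω : Set (Σ m : ℕ, (Fin m → Bool) → Bool)}
    (C : Circuit n Ω) (x : Fin n → Bool) (j : ℕ) : Bool :=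
  if h : j < n then x ⟨j, h⟩
  else if h2 : j - n < C.size then
    C.gate ⟨j - n, h2⟩ (fun t => C.wire x t.val)
  else false
termination_by j
decreasing_by
  have ht := t.isLt
  simp only [not_lt] at h
  simp at ht
  omega

/-- The circuit `C` computes the system `F` if every member of `F` appears on
some wire of `C`. -/
def Circuit.Computes {n : ℕ} {Ω : Set (Σ m : ℕ, (Fin m → Bool) → Bool)}
    (C : Circuit n Ω) (F : Finset ((Fin n → Bool) → Bool)) : Prop :=
  ∀ f ∈ F, ∃ o : ℕ, o < n + C.size ∧ ∀ x, f x = C.wire x o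

/-- The inversion complexity `I_B(F)`: the minimal number of non-monotone
(weight-1) gates in a circuit over the basis computing the system `F`. -/
noncomputable def invCompl (n : ℕ) (Ω : Set (Σ m : ℕ, (Fin m → Bool) → Bool))
    (F : Finset ((Fin n → Bool) → Bool)) : ℕ :=
  sInf {k | ∃ C : Circuit n Ω, C.Computes F ∧ C.nonmono.card = k}

/-- The basis `{¬}`: negation as the unique weight-1 basis function. -/
def negBasis : Set (Σ m : ℕ, (Fin m → Bool) → Bool) :=
  {⟨1, fun v => !(v 0)⟩}


/-! A drop of a function along `a ≤ b` forces `a < b`, so the Hamming weight is a potential that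
bounds the number of jumps: by `k` for any system on `k` variables, and by `(k + 1) / 2` for a
single function, which has to rise again between two drops. Explicit chains attain both bounds.

A circuit all of whose non-monotone gates compute the same function `g` carries on every wire a
monotone function of `(x, g x)`. With no such gate only monotone functions are computed. With one,
a drop of a computed function along `a ≤ b` forces `g b < g a`, so the drops of `¬x` along
`00 ≤ 10` and of `¬y` along `10 ≤ 11` would need `g 10` to be both `0` and `1`.
Conversely `ω(x, y, y) = ¬x` and `ω(y, x, x) = ¬y`. -/

instance (k : ℕ) : DecidableLE (Fin k → Bool) := fun _ _ => decidable_of_iff _ Pi.le_def.symm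

section Weight

variable {ι : Type*} [Fintype ι]

def weight (v : ι → Bool) : ℕ := ∑ i, (v i).toNat

theorem strictMono_weight : StrictMono (weight : (ι → Bool) → ℕ) := fun a b hab => by
  obtain ⟨hle, i, hi⟩ := Pi.lt_def.mp hab
  exact Finset.sum_lt_sum (fun j _ => Bool.toNat_le_toNat (hle j))
    ⟨i, Finset.mem_univ i, by simp_all [Bool.lt_iff]⟩

theorem weight_le_card (v : ι → Bool) : weight v ≤ Fintype.card ι := by
  simpa [weight] using Finset.sum_le_card_nsmul Finset.univ _ 1 fun i _ => Bool.toNat_le (v i)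

theorem weight_lt_weight_of_apply_ne {f : (ι → Bool) → Bool} {a b : ι → Bool} (hab : a ≤ b)
    (hf : f a ≠ f b) : weight a < weight b :=
  strictMono_weight (lt_of_le_of_ne hab fun h => hf (congrArg f h))

end Weight

section Jumps

variable {k : ℕ}

theorem mul_jumps_le_of_potential (F : Finset ((Fin k → Bool) → Bool))
    (φ : (Fin k → Bool) → ℕ) {c m : ℕ} (hφ : ∀ x, φ x ≤ m)
    (hmono : ∀ a b, a ≤ b → φ a ≤ φ b)
    (hdrop : ∀ a b, a ≤ b → ∀ f ∈ F, f a = true → f b = false → φ a + c ≤ φ b)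
    {l : List (Fin k → Bool)} (hl : l.IsChain (· ≤ ·)) : c * jumps F l ≤ m := by
  suffices h : ∀ a t, (a :: t).IsChain (· ≤ ·) → c * jumps F (a :: t) + φ a ≤ m by
    cases l with
    | nil => simp [jumps]
    | cons a t => exact le_of_add_le_left (h a t hl)
  intro a t
  induction t generalizing a with
  | nil => simpa [jumps] using hφ a
  | cons b t ih =>
    intro hch
    obtain ⟨hab, hbt⟩ := List.isChain_cons_cons.mp hch
    have hrest := ih b hbt
    rw [jumps]
    split_ifs with hd
    · obtain ⟨f, hf, hfa, hfb⟩ := hd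
      have := hdrop a b hab f hf hfa hfb
      linarith
    · have := hmono a b hab
      linarith

theorem jumps_le (F : Finset ((Fin k → Bool) → Bool)) {l : List (Fin k → Bool)}
    (hl : l.IsChain (· ≤ ·)) : jumps F l ≤ k := by
  simpa using mul_jumps_le_of_potential F weight (c := 1)
    (fun x => by simpa using weight_le_card x)
    (fun a b hab => strictMono_weight.monotone hab)
    (fun a b hab f _ hfa hfb => weight_lt_weight_of_apply_ne (f := f) hab (by simp [hfa, hfb])) hl

theorem two_mul_jumps_singleton_le (f : (Fin k → Bool) → Bool) {l : List (Fin k → Bool)}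
    (hl : l.IsChain (· ≤ ·)) : 2 * jumps {f} l ≤ k + 1 := by
  refine mul_jumps_le_of_potential {f} (fun x => weight x + (!f x).toNat) (fun x => ?_) ?_ ?_ hl
  · have : weight x ≤ k := by simpa using weight_le_card x
    have := Bool.toNat_le (!f x)
    omega
  · intro a b hab
    rcases eq_or_ne (f a) (f b) with h | h
    · have := strictMono_weight.monotone hab
      simp only [h]
      omega
    · have := weight_lt_weight_of_apply_ne hab h
      have := Bool.toNat_le (!f a)
      omega
  · intro a b hab g hg hga hgb
    rw [Finset.mem_singleton.mp hg] at hga hgb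
    have := weight_lt_weight_of_apply_ne (f := f) hab (by simp [hga, hgb])
    simp only [hga, hgb, Bool.not_true, Bool.not_false, Bool.toNat_false, Bool.toNat_true]
    omega

theorem decrease_eq {F : Finset ((Fin k → Bool) → Bool)} {N : ℕ}
    (hle : ∀ l, IsIncChain l → jumps F l ≤ N) {l : List (Fin k → Bool)} (hl : IsIncChain l)
    (hN : jumps F l = N) : decrease F = N :=
  le_antisymm (csSup_le ⟨N, l, hl, hN⟩ fun _ ⟨l, hl, h⟩ => h ▸ hle l hl)
    (le_csSup ⟨N, fun _ ⟨l, hl, h⟩ => h ▸ hle l hl⟩ ⟨l, hl, hN⟩)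

end Jumps

namespace Circuit

variable {n : ℕ} {Ω : Set (Σ m : ℕ, (Fin m → Bool) → Bool)}

theorem wire_of_lt (C : Circuit n Ω) (x : Fin n → Bool) {j : ℕ} (hj : j < n) :
    C.wire x j = x ⟨j, hj⟩ := by
  rw [wire, dif_pos hj]

theorem wire_add (C : Circuit n Ω) (x : Fin n → Bool) (i : Fin C.size) :
    C.wire x (n + i) = C.gate i fun t => C.wire x t := by
  rw [wire, dif_neg (by omega), dif_pos (by omega)]
  have hi : (⟨n + i - n, by omega⟩ : Fin C.size) = i := Fin.ext (by simp)
  rw [hi]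

theorem wire_of_le (C : Circuit n Ω) (x : Fin n → Bool) {j : ℕ} (hj : n + C.size ≤ j) :
    C.wire x j = false := by
  rw [wire, dif_neg (by omega), dif_neg (by omega)]

theorem exists_monotone_wire_eq (C : Circuit n Ω) (g : (Fin n → Bool) → Bool)
    (hg : ∀ i ∈ C.nonmono, ∀ x, C.wire x (n + i) = g x) (j : ℕ) :
    ∃ H : (Fin n → Bool) × Bool → Bool, Monotone H ∧ ∀ x, C.wire x j = H (x, g x) := by
  induction j using Nat.strong_induction_on with
  | _ j ih =>
  rcases lt_or_ge j n with hjn | hjn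
  · exact ⟨fun p => p.1 ⟨j, hjn⟩, fun p q hpq => hpq.1 _, fun x => C.wire_of_lt x hjn⟩
  obtain ⟨i, rfl⟩ := Nat.exists_eq_add_of_le hjn
  rcases lt_or_ge i C.size with hi | hi
  swap
  · exact ⟨fun _ => false, monotone_const, fun x => C.wire_of_le x (by omega)⟩
  by_cases hnm : ⟨i, hi⟩ ∈ C.nonmono
  · exact ⟨Prod.snd, monotone_snd, hg _ hnm⟩
  choose H hH hHx using fun t : Fin (n + i) => ih t (by omega)
  refine ⟨fun p => C.gate ⟨i, hi⟩ fun t => H t p,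
    fun p q hpq => C.mono_ok _ hnm fun t => hH t hpq, fun x => ?_⟩
  rw [C.wire_add x ⟨i, hi⟩]
  simp only [hHx]

theorem monotone_wire (C : Circuit n Ω) (hC : C.nonmono = ∅) (j : ℕ) :
    Monotone fun x => C.wire x j := by
  obtain ⟨H, hH, hx⟩ := C.exists_monotone_wire_eq (fun _ => false) (by simp [hC]) j
  intro a b hab
  simpa only [hx] using hH (Prod.mk_le_mk.mpr ⟨hab, le_rfl⟩)

theorem exists_monotone_wire_eq_of_card_le_one (C : Circuit n Ω) (hC : C.nonmono.card ≤ 1) :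
    ∃ g : (Fin n → Bool) → Bool, ∀ j, ∃ H : (Fin n → Bool) × Bool → Bool,
      Monotone H ∧ ∀ x, C.wire x j = H (x, g x) := by
  rcases C.nonmono.eq_empty_or_nonempty with h | ⟨i₀, hi₀⟩
  · exact ⟨fun _ => false, C.exists_monotone_wire_eq _ (by simp [h])⟩
  · refine ⟨fun x => C.wire x (n + i₀), C.exists_monotone_wire_eq _ fun i hi x => ?_⟩
    rw [Finset.card_le_one.mp hC i hi i₀ hi₀]

def parallel (ω : Σ m : ℕ, (Fin m → Bool) → Bool) (hω : ω ∈ Ω) (s : ℕ)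
    (sel : Fin s → Fin ω.1 → Fin n) : Circuit n Ω where
  size := s
  gate i v := ω.2 fun j => v (Fin.castLE (Nat.le_add_right n i) (sel i j))
  nonmono := Finset.univ
  mono_ok i hi := absurd (Finset.mem_univ i) hi
  basis_ok i _ := ⟨ω, hω, fun j => Fin.castLE (Nat.le_add_right n i) (sel i j), rfl⟩

@[simp]
theorem card_nonmono_parallel (ω : Σ m : ℕ, (Fin m → Bool) → Bool) (hω : ω ∈ Ω) (s : ℕ)
    (sel : Fin s → Fin ω.1 → Fin n) : (parallel ω hω s sel).nonmono.card = s := by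
  simp [parallel]

theorem computes_parallel {ω : Σ m : ℕ, (Fin m → Bool) → Bool} (hω : ω ∈ Ω) {s : ℕ}
    {sel : Fin s → Fin ω.1 → Fin n} {F : Finset ((Fin n → Bool) → Bool)}
    (hF : ∀ f ∈ F, ∃ i, f = fun x => ω.2 fun j => x (sel i j)) :
    (parallel ω hω s sel).Computes F := by
  intro f hf
  obtain ⟨i, rfl⟩ := hF f hf
  refine ⟨n + i, by simp [parallel], fun x => ?_⟩
  rw [wire_add (parallel ω hω s sel) x i]
  simp [parallel, wire_of_lt]

end Circuit

section InversionComplexity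

variable {n : ℕ} {Ω : Set (Σ m : ℕ, (Fin m → Bool) → Bool)} {F : Finset ((Fin n → Bool) → Bool)}

theorem Monotone.snd_lt_of_drop {α : Type*} [Preorder α] {H : α × Bool → Bool} (hH : Monotone H)
    {a b : α} (hab : a ≤ b) {u v : Bool} (ha : H (a, u) = true) (hb : H (b, v) = false) :
    v < u :=
  not_le.mp fun huv => by
    have := hH (Prod.mk_le_mk.mpr ⟨hab, huv⟩)
    rw [ha, hb] at this
    exact absurd this (by decide)

theorem one_le_card_nonmono_of_not_monotone (C : Circuit n Ω) (hC : C.Computes F)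
    {f : (Fin n → Bool) → Bool} (hf : f ∈ F) (hnm : ¬ Monotone f) : 1 ≤ C.nonmono.card := by
  by_contra! h
  obtain ⟨o, -, ho⟩ := hC f hf
  rw [funext ho] at hnm
  exact hnm (C.monotone_wire (Finset.card_eq_zero.mp (by omega)) o)

theorem two_le_card_nonmono_of_drops (C : Circuit n Ω) (hC : C.Computes F)
    {f₁ f₂ : (Fin n → Bool) → Bool} (hf₁ : f₁ ∈ F) (hf₂ : f₂ ∈ F) {a b c : Fin n → Bool}
    (hab : a ≤ b) (hbc : b ≤ c) (h₁a : f₁ a = true) (h₁b : f₁ b = false)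
    (h₂b : f₂ b = true) (h₂c : f₂ c = false) : 2 ≤ C.nonmono.card := by
  by_contra! hcard
  obtain ⟨g, hg⟩ := C.exists_monotone_wire_eq_of_card_le_one (by omega)
  obtain ⟨o₁, -, ho₁⟩ := hC f₁ hf₁
  obtain ⟨o₂, -, ho₂⟩ := hC f₂ hf₂
  obtain ⟨H₁, hH₁, hx₁⟩ := hg o₁
  obtain ⟨H₂, hH₂, hx₂⟩ := hg o₂
  have hba : g b < g a :=
    hH₁.snd_lt_of_drop hab (by rw [← hx₁, ← ho₁, h₁a]) (by rw [← hx₁, ← ho₁, h₁b])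
  have hcb : g c < g b :=
    hH₂.snd_lt_of_drop hbc (by rw [← hx₂, ← ho₂, h₂b]) (by rw [← hx₂, ← ho₂, h₂c])
  simp_all [Bool.lt_iff]

theorem invCompl_eq {k : ℕ} (C : Circuit n Ω) (hC : C.Computes F) (hk : C.nonmono.card = k)
    (hmin : ∀ C' : Circuit n Ω, C'.Computes F → k ≤ C'.nonmono.card) : invCompl n Ω F = k :=
  le_antisymm (Nat.sInf_le ⟨C, hC, hk⟩)
    (le_csInf ⟨k, C, hC, hk⟩ fun _ ⟨C', hC', h⟩ => h ▸ hmin C' hC')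

end InversionComplexity

/-- for `F₁ = {x⊕y⊕z⊕1}` and `F₂ = {¬x, ¬y}` over the basis
`B₂ = M ∪ {x⊕y⊕z⊕1}`: `d(F₁) = d(F₂) = 2` yet `I_{B₂}(F₁) = 1` and
`I_{B₂}(F₂) = 2`, so inversion complexity is not a function of `d(F)` alone. -/
theorem stmt15 :
    decrease ({fun v : Fin 3 → Bool => !(v 0 ^^ (v 1 ^^ v 2))} :
        Finset ((Fin 3 → Bool) → Bool)) = 2 ∧
    decrease ({fun v : Fin 2 → Bool => !(v 0), fun v : Fin 2 → Bool => !(v 1)} :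
        Finset ((Fin 2 → Bool) → Bool)) = 2 ∧
    invCompl 3 ({⟨3, fun v => !(v 0 ^^ (v 1 ^^ v 2))⟩} :
        Set (Σ m : ℕ, (Fin m → Bool) → Bool))
      ({fun v : Fin 3 → Bool => !(v 0 ^^ (v 1 ^^ v 2))} :
        Finset ((Fin 3 → Bool) → Bool)) = 1 ∧
    invCompl 2 ({⟨3, fun v => !(v 0 ^^ (v 1 ^^ v 2))⟩} :
        Set (Σ m : ℕ, (Fin m → Bool) → Bool))
      ({fun v : Fin 2 → Bool => !(v 0), fun v : Fin 2 → Bool => !(v 1)} :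
        Finset ((Fin 2 → Bool) → Bool)) = 2 := by
  refine ⟨?_, ?_, ?_, ?_⟩
  · refine decrease_eq
      (fun l hl => Nat.le_of_mul_le_mul_left (two_mul_jumps_singleton_le _ hl.1) two_pos)
      (l := [![false, false, false], ![true, false, false], ![true, true, false],
        ![true, true, true]]) ⟨show List.IsChain _ _ by decide, by decide⟩ (by simp [jumps])
  · exact decrease_eq (fun l hl => jumps_le _ hl.1)
      (l := [![false, false], ![true, false], ![true, true]])
      ⟨show List.IsChain _ _ by decide, by decide⟩ (by simp [jumps])
  · refine invCompl_eq (.parallel _ (Set.mem_singleton _) 1 fun _ => id)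
      (Circuit.computes_parallel _ (by simp)) (Circuit.card_nonmono_parallel ..) fun C hC =>
        one_le_card_nonmono_of_not_monotone C hC (Finset.mem_singleton_self _) ?_
    unfold Monotone
    decide
  · refine invCompl_eq (.parallel _ (Set.mem_singleton _) 2 ![![0, 1, 1], ![1, 0, 0]])
      (Circuit.computes_parallel _ ?_) (Circuit.card_nonmono_parallel ..) fun C hC =>
        two_le_card_nonmono_of_drops C hC (Finset.mem_insert_self _ _)
          (Finset.mem_insert_of_mem (Finset.mem_singleton_self _))
          (a := ![false, false]) (b := ![true, false]) (c := ![true, true])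
          (by decide) (by decide) rfl rfl rfl rfl
    simp only [Finset.mem_insert, Finset.mem_singleton, forall_eq_or_imp, forall_eq]
    exact ⟨⟨0, funext fun x => by simp⟩, ⟨1, funext fun x => by simp⟩⟩
end

section
/- Splitting lemma: let C = (α_1, …, α_s) be an increasing chain in {0,1}^n and h : {0,1}^n → {0,1} any function. Let C₀ be the subsequence of indices j with h(α_j) = 0 and C₁ the subsequence with h(α_j) = 1. Then the sequences ((h(α_j), α_j)) restricted to C₀ and to C₁ are each increasing chains in {0,1}^{n+1}, and for any system F, d_C(F) ≤ d_{C₀'}(F') + d_{C₁'}(F') + (number of indices i with h(α_i) ≠ h(α_{i+1})), where F' is any system on {0,1}^{n+1} with f(x) = f'(h(x), x) for each f ∈ F and corresponding f' ∈ F'. -/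
/-!
On a subchain where `h` is constant, prepending the value of `h` is an order embedding, so `C₀'`
and `C₁'` are again increasing chains. For the jump count, walk along consecutive pairs of `C`:
a pair on which `h` is constant is also consecutive in `C₀` or `C₁`, and `f = f' ∘ (h, ·)` turns
a jump of `F` there into a jump of `F'`; a pair on which `h` changes contributes at most one jump,
paid for by the change of `h`.
-/

lemma Fin.cons_lt_cons_iff_right {n : ℕ} {α : Fin (n + 1) → Type*} [∀ i, Preorder (α i)]
    {x₀ : α 0} {x y : ∀ i : Fin n, α i.succ} :
    (Fin.cons x₀ x : ∀ i, α i) < Fin.cons x₀ y ↔ x < y := by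
  simp [lt_iff_le_not_ge, Fin.cons_le_cons]

lemma isIncChain_iff_pairwise_lt {k : ℕ} {l : List (Fin k → Bool)} :
    IsIncChain l ↔ l.Pairwise (· < ·) := by
  rw [IsIncChain, List.Chain', List.isChain_iff_pairwise, ← List.pairwise_and_iff]
  simp only [lt_iff_le_and_ne]

lemma IsIncChain.filter_map_cons {n : ℕ} {l : List (Fin n → Bool)} (hl : IsIncChain l)
    (h : (Fin n → Bool) → Bool) (c : Bool) :
    IsIncChain ((l.filter (h · = c)).map fun a => Fin.cons (h a) a) := by
  have hcons : (l.filter (h · = c)).map (fun a => Fin.cons (h a) a) =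
      (l.filter (h · = c)).map (Fin.cons (α := fun _ => Bool) c) :=
    List.map_congr_left fun a ha => by rw [of_decide_eq_true (List.of_mem_filter ha :)]
  rw [isIncChain_iff_pairwise_lt] at hl ⊢
  rw [hcons, List.pairwise_map]
  exact (hl.filter _).imp (Fin.cons_lt_cons_iff_right (α := fun _ => Bool)).mpr

section Jumps

variable {k m : ℕ}

def HasJump (F : Finset ((Fin k → Bool) → Bool)) (a b : Fin k → Bool) : Prop :=
  ∃ f ∈ F, f a = true ∧ f b = false

variable (F : Finset ((Fin k → Bool) → Bool)) {F' : Finset ((Fin m → Bool) → Bool)}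

lemma jumps_le_jumps_cons (a : Fin k → Bool) (l : List (Fin k → Bool)) :
    jumps F l ≤ jumps F (a :: l) := by
  cases l <;> simp [jumps]

lemma jumps_cons_cons_le_succ (a b : Fin k → Bool) (t : List (Fin k → Bool)) :
    jumps F (a :: b :: t) ≤ jumps F (b :: t) + 1 := by
  simp only [jumps]
  split <;> omega

variable {F}

lemma HasJump.map {g : (Fin k → Bool) → Fin m → Bool}
    (hcorr : ∀ f ∈ F, ∃ f' ∈ F', ∀ x, f x = f' (g x)) {a b : Fin k → Bool}
    (hab : HasJump F a b) : HasJump F' (g a) (g b) := by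
  obtain ⟨f, hf, hfa, hfb⟩ := hab
  obtain ⟨f', hf', hff'⟩ := hcorr f hf
  exact ⟨f', hf', hff' a ▸ hfa, hff' b ▸ hfb⟩

lemma jumps_cons_cons_add_le {a b : Fin k → Bool} {a' b' : Fin m → Bool}
    (hjump : HasJump F a b → HasJump F' a' b') (t : List (Fin k → Bool))
    (t' : List (Fin m → Bool)) :
    jumps F (a :: b :: t) + jumps F' (b' :: t') ≤
      jumps F (b :: t) + jumps F' (a' :: b' :: t') := by
  unfold HasJump at hjump
  simp only [jumps]
  split_ifs <;> grind

lemma jumps_le_jumps_filter_map_add_changes (h : (Fin k → Bool) → Bool)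
    {g : (Fin k → Bool) → Fin m → Bool} (hcorr : ∀ f ∈ F, ∃ f' ∈ F', ∀ x, f x = f' (g x))
    (l : List (Fin k → Bool)) :
    jumps F l ≤ jumps F' ((l.filter (h · = false)).map g) +
      jumps F' ((l.filter (h · = true)).map g) + changes h l := by
  induction l with
  | nil => simp [jumps]
  | cons a t ih =>
    cases t with
    | nil => simp [jumps]
    | cons b t =>
      have hstep := jumps_cons_cons_add_le (HasJump.map hcorr (a := a) (b := b)) t
      have hchange := jumps_cons_cons_le_succ F a b t
      cases ha : h a <;> cases hb : h b <;>
        simp only [ha, hb, Bool.decide_eq_false, Bool.decide_eq_true, Bool.not_false, Bool.not_true,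
          Bool.false_eq_true, Bool.true_eq_false, not_false_eq_true, not_true_eq_false,
          List.filter_cons_of_pos, List.filter_cons_of_neg, List.map_cons, changes, ne_eq,
          ↓reduceIte, zero_add] at ih ⊢
      · have := hstep ((t.filter (!h ·)).map g)
        omega
      · have := jumps_le_jumps_cons F' (g a) ((t.filter (!h ·)).map g)
        omega
      · have := jumps_le_jumps_cons F' (g a) ((t.filter (h ·)).map g)
        omega
      · have := hstep ((t.filter (h ·)).map g)
        omega

end Jumps

/-- splitting lemma: splitting an increasing chain `C` according
to the value of `h` yields two increasing chains in `{0,1}^{n+1}` (after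
prepending the value of `h` to each tuple), and the jumps of `F` along `C` are
bounded by the jumps of `F'` along the two subchains plus the number of value
changes of `h` along `C`. -/
theorem stmt19 {n : ℕ} (l : List (Fin n → Bool)) (hl : IsIncChain l)
    (h : (Fin n → Bool) → Bool)
    (F : Finset ((Fin n → Bool) → Bool))
    (F' : Finset ((Fin (n + 1) → Bool) → Bool))
    (hcorr : ∀ f ∈ F, ∃ f' ∈ F', ∀ x, f x = f' (Fin.cons (h x) x)) :
    IsIncChain ((l.filter (fun a => h a = false)).map
      (fun a => Fin.cons (h a) a)) ∧
    IsIncChain ((l.filter (fun a => h a = true)).map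
      (fun a => Fin.cons (h a) a)) ∧
    jumps F l ≤
      jumps F' ((l.filter (fun a => h a = false)).map (fun a => Fin.cons (h a) a)) +
      jumps F' ((l.filter (fun a => h a = true)).map (fun a => Fin.cons (h a) a)) +
      changes h l :=
  ⟨hl.filter_map_cons h false, hl.filter_map_cons h true,
    jumps_le_jumps_filter_map_add_changes h hcorr l⟩
end
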